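/- arXiv:1205.1854 — 2 statements merged into one kernel-verified Lean document; each statement's English description precedes it below -/
import Mathlib

section
/- For any exponent p with 1 < p < 2 and any vectors ξ, η in ℝ^N not both zero, one has ((|ξ|^{p-2}ξ - |η|^{p-2}η) · (ξ - η)) · (|ξ|^p + |η|^p)^{(2-p)/p} ≥ (p-1) |ξ - η|^2. -/
/-!
Write `a = ‖ξ‖`, `b = ‖η‖`, `s = ⟪ξ, η⟫` and `M = (a ^ p + b ^ p) ^ ((2 - p) / p)`. Both sides are
affine in `s`, which Cauchy–Schwarz confines to `[-a b, a b]`, so it suffices to check the two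
endpoints. At `s = a b` the inequality is the concavity of `t ↦ t ^ (p - 1)` (weighted AM–GM),
at `s = -a b` it is the bound `t ≤ t ^ (p - 1) M`; both only use `max a b ^ (2 - p) ≤ M`.
-/

open Real

lemma rpow_mul_rpow_one_sub {a : ℝ} (ha : 0 ≤ a) (q : ℝ) : a ^ q * a ^ (1 - q) = a := by
  rw [← rpow_add' ha (by norm_num), add_sub_cancel, rpow_one]

lemma rpow_mul_le_add_rpow_rpow {a b : ℝ} (ha : 0 ≤ a) (hb : 0 ≤ b) (p : ℝ) {r : ℝ}
    (hr : 0 ≤ r) : a ^ (p * r) ≤ (a ^ p + b ^ p) ^ r := by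
  rw [rpow_mul ha]
  exact rpow_le_rpow (rpow_nonneg ha p) (le_add_of_nonneg_right (rpow_nonneg hb p)) hr

/-- The tangent-line inequality for the concave function `t ↦ t ^ q`, multiplied by `a ^ (1 - q)`. -/
lemma mul_sub_le_rpow_sub_rpow_mul {a b q : ℝ} (ha : 0 ≤ a) (hb : 0 ≤ b) (hq₀ : 0 ≤ q)
    (hq₁ : q ≤ 1) : q * (a - b) ≤ (a ^ q - b ^ q) * a ^ (1 - q) := by
  have amgm := geom_mean_le_arith_mean2_weighted hq₀ (sub_nonneg.2 hq₁) hb ha (by ring)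
  rw [sub_mul, rpow_mul_rpow_one_sub ha]
  linarith

lemma le_rpow_mul_of_rpow_one_sub_le {a q M : ℝ} (ha : 0 ≤ a) (haM : a ^ (1 - q) ≤ M) :
    a ≤ a ^ q * M :=
  calc a = a ^ q * a ^ (1 - q) := (rpow_mul_rpow_one_sub ha q).symm
    _ ≤ a ^ q * M := mul_le_mul_of_nonneg_left haM (rpow_nonneg ha q)

lemma mul_sub_sq_le_rpow_sub_rpow_mul {a b q M : ℝ} (ha : 0 ≤ a) (hb : 0 ≤ b) (hq₀ : 0 ≤ q)
    (hq₁ : q ≤ 1) (haM : a ^ (1 - q) ≤ M) (hbM : b ^ (1 - q) ≤ M) :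
    q * (a - b) ^ 2 ≤ (a ^ q - b ^ q) * (a - b) * M := by
  wlog hba : b ≤ a generalizing a b
  · convert this hb ha hbM haM (le_of_not_ge hba) using 1 <;> ring
  have hpow : 0 ≤ a ^ q - b ^ q := sub_nonneg.2 (rpow_le_rpow hb hba hq₀)
  have htangent : q * (a - b) ≤ (a ^ q - b ^ q) * M :=
    (mul_sub_le_rpow_sub_rpow_mul ha hb hq₀ hq₁).trans (mul_le_mul_of_nonneg_left haM hpow)
  calc q * (a - b) ^ 2 = q * (a - b) * (a - b) := by ring
    _ ≤ (a ^ q - b ^ q) * M * (a - b) := mul_le_mul_of_nonneg_right htangent (sub_nonneg.2 hba)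
    _ = (a ^ q - b ^ q) * (a - b) * M := by ring

lemma mul_add_sq_le_rpow_add_rpow_mul {a b q M : ℝ} (ha : 0 ≤ a) (hb : 0 ≤ b) (hq₁ : q ≤ 1)
    (haM : a ^ (1 - q) ≤ M) (hbM : b ^ (1 - q) ≤ M) :
    q * (a + b) ^ 2 ≤ (a ^ q + b ^ q) * (a + b) * M := by
  have hsum : a + b ≤ (a ^ q + b ^ q) * M := by
    linarith [le_rpow_mul_of_rpow_one_sub_le ha haM, le_rpow_mul_of_rpow_one_sub_le hb hbM]
  nlinarith [sq_nonneg (a + b)]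

lemma affine_nonneg_of_abs_le {α β c s : ℝ} (hs : |s| ≤ c) (hneg : 0 ≤ α - β * c)
    (hpos : 0 ≤ α + β * c) : 0 ≤ α + β * s := by
  obtain ⟨hs₁, hs₂⟩ := abs_le.1 hs
  rcases le_total 0 β with hβ | hβ
  · nlinarith [mul_le_mul_of_nonneg_left hs₁ hβ]
  · nlinarith [mul_le_mul_of_nonpos_left hs₂ hβ]

theorem mul_norm_sub_sq_le_inner_rpow_smul_sub_mul {E : Type*} [NormedAddCommGroup E]
    [InnerProductSpace ℝ E] {p : ℝ} (hp1 : 1 < p) (hp2 : p < 2) (x y : E) :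
    (p - 1) * ‖x - y‖ ^ 2 ≤
      inner ℝ (‖x‖ ^ (p - 2) • x - ‖y‖ ^ (p - 2) • y) (x - y) *
        (‖x‖ ^ p + ‖y‖ ^ p) ^ ((2 - p) / p) := by
  set a := ‖x‖
  set b := ‖y‖
  set s := inner ℝ x y
  set M := (a ^ p + b ^ p) ^ ((2 - p) / p)
  have ha : 0 ≤ a := norm_nonneg x
  have hb : 0 ≤ b := norm_nonneg y
  have hexp : p * ((2 - p) / p) = 1 - (p - 1) := by field_simp; ring
  have hr : 0 ≤ (2 - p) / p := div_nonneg (by linarith) (by linarith)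
  have haM : a ^ (1 - (p - 1)) ≤ M := hexp ▸ rpow_mul_le_add_rpow_rpow ha hb p hr
  have hbM : b ^ (1 - (p - 1)) ≤ M := by
    simpa only [hexp, add_comm (b ^ p)] using rpow_mul_le_add_rpow_rpow hb ha p hr
  have hmul_self {t : ℝ} (ht : 0 ≤ t) : t ^ (p - 2) * t = t ^ (p - 1) := by
    rw [← rpow_add_one' ht (by linarith)]
    ring_nf
  have hinner : inner ℝ (a ^ (p - 2) • x - b ^ (p - 2) • y) (x - y) =
      a ^ (p - 2) * a ^ 2 + b ^ (p - 2) * b ^ 2 - (a ^ (p - 2) + b ^ (p - 2)) * s := by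
    simp only [inner_sub_left, inner_sub_right, real_inner_smul_left, real_inner_self_eq_norm_sq,
      real_inner_comm x y]
    ring
  have hsub := mul_sub_sq_le_rpow_sub_rpow_mul ha hb (by linarith) (by linarith) haM hbM
  have hadd := mul_add_sq_le_rpow_add_rpow_mul ha hb (by linarith) haM hbM
  rw [← hmul_self ha, ← hmul_self hb] at hsub hadd
  rw [hinner, norm_sub_sq_real]
  have := affine_nonneg_of_abs_le (abs_real_inner_le_norm x y)
    (α := (a ^ (p - 2) * a ^ 2 + b ^ (p - 2) * b ^ 2) * M - (p - 1) * (a ^ 2 + b ^ 2))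
    (β := 2 * (p - 1) - (a ^ (p - 2) + b ^ (p - 2)) * M)
    (by linear_combination hadd) (by linear_combination hsub)
  linear_combination this

theorem stmt_1_general (N : ℕ) (p : ℝ) (hp1 : 1 < p) (hp2 : p < 2)
    (ξ η : EuclideanSpace ℝ (Fin N)) :
    (p - 1) * ‖ξ - η‖ ^ 2 ≤
      (inner ℝ (‖ξ‖ ^ (p - 2) • ξ - ‖η‖ ^ (p - 2) • η) (ξ - η) : ℝ) *
        (‖ξ‖ ^ p + ‖η‖ ^ p) ^ ((2 - p) / p) :=
  mul_norm_sub_sq_le_inner_rpow_smul_sub_mul hp1 hp2 ξ η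

theorem stmt_1 (N : ℕ) (p : ℝ) (hp1 : 1 < p) (hp2 : p < 2)
    (ξ η : EuclideanSpace ℝ (Fin N)) (h : ¬(ξ = 0 ∧ η = 0)) :
    (p - 1) * ‖ξ - η‖ ^ 2 ≤
      (inner ℝ (‖ξ‖ ^ (p - 2) • ξ - ‖η‖ ^ (p - 2) • η) (ξ - η) : ℝ) *
        (‖ξ‖ ^ p + ‖η‖ ^ p) ^ ((2 - p) / p) :=
  stmt_1_general N p hp1 hp2 ξ η
end

section
/- Let X be a real Banach space with norm ‖·‖, X₁ a normed space, and j : X → X₁ a compact linear embedding. Suppose X is reflexive and separable with a Schauder basis (e_j), with biorthogonal functionals (e_j*) ⊂ X*, and set Z_k = closure of span{e_j : j ≥ k}. Define β_k = sup{‖j(u)‖_{X₁} : u ∈ Z_k, ‖u‖ = 1}. Then β_k → 0 as k → ∞. -/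
/-!
Choose `u k ∈ Z k` with `‖u k‖ ≤ 1` and `β k < ‖j (u k)‖ + 1 / (k + 1)`; the coordinate
`estar i (u k)` vanishes as soon as `k > i`. By reflexivity (Banach–Alaoglu in the bidual),
every subsequence of `u` has a weak cluster point, whose coordinates are all `0`, so it is `0`.
Compactness of `j` gives a further subsequence along which `j ∘ u` converges in norm, and the
limit is the image of the weak cluster point, i.e. `0`. Hence `j ∘ u → 0`, and so `β → 0`.
-/

open Filter Topology NormedSpace

section WeakCompactness

variable {𝕜 X Y : Type*} [RCLike 𝕜] [NormedAddCommGroup X] [NormedSpace 𝕜 X]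
  [NormedAddCommGroup Y] [NormedSpace 𝕜 Y]

theorem isCompact_closure_of_isBounded_of_surjective_inclusionInDoubleDual
    (hrefl : Function.Surjective (inclusionInDoubleDual 𝕜 X)) {S : Set (WeakSpace 𝕜 X)}
    (hS : Bornology.IsBounded (toWeakSpace 𝕜 X ⁻¹' S)) : IsCompact (closure S) := by
  refine isCompact_closure_of_isBounded 𝕜 X S hS fun φ _ => ?_
  obtain ⟨x, hx⟩ := hrefl (WeakDual.toStrongDual φ)
  exact ⟨toWeakSpace 𝕜 X x, congrArg StrongDual.toWeakDual hx⟩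

theorem exists_mapClusterPt_toWeakSpace_of_norm_le
    (hrefl : Function.Surjective (inclusionInDoubleDual 𝕜 X)) {ι : Type*} {l : Filter ι}
    [l.NeBot] {z : ι → X} {R : ℝ} (hz : ∀ n, ‖z n‖ ≤ R) :
    ∃ u : X, MapClusterPt (toWeakSpace 𝕜 X u) l (toWeakSpace 𝕜 X ∘ z) := by
  have hK := isCompact_closure_of_isBounded_of_surjective_inclusionInDoubleDual hrefl
    (S := Set.range (toWeakSpace 𝕜 X ∘ z)) <| isBounded_iff_forall_norm_le.2 ⟨R, ?_⟩
  · obtain ⟨u, -, hu⟩ := hK.exists_clusterPt (f := map (toWeakSpace 𝕜 X ∘ z) l)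
      (le_principal_iff.2 (mem_map.2 (Eventually.of_forall fun n => subset_closure ⟨n, rfl⟩)))
    exact ⟨u, hu⟩
  rintro x ⟨n, hn⟩
  rw [← (toWeakSpace 𝕜 X).injective hn]
  exact hz n

theorem ContinuousLinearMap.eq_of_mapClusterPt_toWeakSpace_of_tendsto (T : X →L[𝕜] Y)
    {ι : Type*} {l : Filter ι} {z : ι → X} {u : X}
    (hu : MapClusterPt (toWeakSpace 𝕜 X u) l (toWeakSpace 𝕜 X ∘ z)) {v : Y}
    (hv : Tendsto (T ∘ z) l (𝓝 v)) : T u = v := by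
  have hweak : Tendsto (toWeakSpace 𝕜 Y ∘ T ∘ z) l (𝓝 (toWeakSpace 𝕜 Y v)) :=
    ((toWeakSpaceCLM 𝕜 Y).continuous.tendsto v).comp hv
  have hTu : MapClusterPt (WeakSpace.map T (toWeakSpace 𝕜 X u)) l
      (WeakSpace.map T ∘ toWeakSpace 𝕜 X ∘ z) :=
    hu.continuousAt_comp (WeakSpace.map T).continuous.continuousAt
  have hcluster : ClusterPt (WeakSpace.map T (toWeakSpace 𝕜 X u)) (𝓝 (toWeakSpace 𝕜 Y v)) :=
    ClusterPt.mono hTu hweak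
  exact (toWeakSpace 𝕜 Y).injective (eq_of_nhds_neBot hcluster)

theorem eq_zero_of_forall_coord_eq_zero {e : ℕ → X} {f : ℕ → StrongDual 𝕜 X}
    (hbasis : ∀ x : X, Tendsto (fun n => ∑ i ∈ Finset.range n, f i x • e i) atTop (𝓝 x))
    {x : X} (hx : ∀ i, f i x = 0) : x = 0 :=
  tendsto_nhds_unique (hbasis x) (by simp [hx])

theorem IsCompactOperator.tendsto_zero_of_tendsto_coord
    (hrefl : Function.Surjective (inclusionInDoubleDual 𝕜 X)) {T : X →L[𝕜] Y}
    (hT : IsCompactOperator T) {e : ℕ → X} {f : ℕ → StrongDual 𝕜 X}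
    (hbasis : ∀ x : X, Tendsto (fun n => ∑ i ∈ Finset.range n, f i x • e i) atTop (𝓝 x))
    {z : ℕ → X} {R : ℝ} (hz : ∀ n, ‖z n‖ ≤ R)
    (hcoord : ∀ i, Tendsto (fun n => f i (z n)) atTop (𝓝 0)) :
    Tendsto (T ∘ z) atTop (𝓝 0) := by
  refine tendsto_of_subseq_tendsto fun ns hns => ?_
  have hK := hT.isCompact_closure_image_closedBall R
  obtain ⟨v, -, ms, hms, hv⟩ := hK.tendsto_subseq (x := fun n => T (z (ns n)))
    fun n => subset_closure ⟨z (ns n), mem_closedBall_zero_iff.2 (hz (ns n)), rfl⟩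
  have hsub : Tendsto (ns ∘ ms) atTop atTop := hns.comp hms.tendsto_atTop
  obtain ⟨u, hu⟩ := exists_mapClusterPt_toWeakSpace_of_norm_le (l := atTop) hrefl
    fun n => hz (ns (ms n))
  have hu0 : u = 0 := eq_zero_of_forall_coord_eq_zero hbasis fun i =>
    (f i).eq_of_mapClusterPt_toWeakSpace_of_tendsto hu ((hcoord i).comp hsub)
  refine ⟨ms, ?_⟩
  rwa [← T.eq_of_mapClusterPt_toWeakSpace_of_tendsto hu hv, hu0, map_zero] at hv

end WeakCompactness

theorem ContinuousLinearMap.map_eq_zero_of_mem_closure_span {R M N : Type*} [Semiring R]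
    [AddCommMonoid M] [Module R M] [TopologicalSpace M] [AddCommMonoid N] [Module R N]
    [TopologicalSpace N] [T1Space N] (f : M →L[R] N) {s : Set M} (hs : ∀ x ∈ s, f x = 0)
    {x : M} (hx : x ∈ closure (Submodule.span R s : Set M)) : f x = 0 :=
  f.isClosed_ker.closure_subset_iff.2 (Submodule.span_le.2 hs) hx

theorem stmt_12_general (X X₁ : Type*) [NormedAddCommGroup X] [NormedSpace ℝ X]
    [NormedAddCommGroup X₁] [NormedSpace ℝ X₁]
    (hrefl : Function.Surjective (NormedSpace.inclusionInDoubleDual ℝ X))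
    (j : X →L[ℝ] X₁) (hjcompact : IsCompactOperator j)
    (e : ℕ → X) (estar : ℕ → StrongDual ℝ X)
    (hbiorth : ∀ i k : ℕ, estar i (e k) = if i = k then 1 else 0)
    (hbasis : ∀ x : X, Tendsto (fun n => ∑ i ∈ Finset.range n, estar i x • e i)
      atTop (nhds x))
    (Z : ℕ → Set X)
    (hZ : ∀ k, Z k = closure (Submodule.span ℝ (e '' {i | k ≤ i}) : Set X))
    (β : ℕ → ℝ)
    (hβ : ∀ k, β k = sSup {r : ℝ | ∃ u ∈ Z k, ‖u‖ = 1 ∧ r = ‖j u‖}) :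
    Tendsto β atTop (nhds 0) := by
  have hnear : ∀ k : ℕ, ∃ u ∈ Z k, ‖u‖ ≤ 1 ∧ β k < ‖j u‖ + 1 / (k + 1) := by
    intro k
    rcases Set.eq_empty_or_nonempty {r : ℝ | ∃ u ∈ Z k, ‖u‖ = 1 ∧ r = ‖j u‖} with hS | hS
    · refine ⟨0, hZ k ▸ subset_closure (Submodule.zero_mem _), by simp, ?_⟩
      rw [hβ, hS, Real.sSup_empty, map_zero, norm_zero, zero_add]
      exact Nat.one_div_pos_of_nat
    · obtain ⟨_, ⟨u, hu, hu1, rfl⟩, hlt⟩ :=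
        exists_lt_of_lt_csSup hS (hβ k ▸ sub_lt_self (β k) (Nat.one_div_pos_of_nat (n := k)))
      exact ⟨u, hu, hu1.le, by rw [hβ]; linarith⟩
  choose u huZ hu1 hβu using hnear
  have hcoord : ∀ i, Tendsto (fun k => estar i (u k)) atTop (𝓝 0) := fun i =>
    tendsto_const_nhds.congr' <| (eventually_gt_atTop i).mono fun k hik => by
      refine ((estar i).map_eq_zero_of_mem_closure_span ?_ (hZ k ▸ huZ k)).symm
      rintro _ ⟨m, hm, rfl⟩
      simp [hbiorth, (hik.trans_le hm).ne]
  have hju := hjcompact.tendsto_zero_of_tendsto_coord hrefl hbasis hu1 hcoord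
  refine squeeze_zero (fun k => ?_) (fun k => (hβu k).le) ?_
  · rw [hβ]
    exact Real.sSup_nonneg fun r ⟨v, _, _, hr⟩ => hr ▸ norm_nonneg _
  · simpa using hju.norm.add tendsto_one_div_add_atTop_nhds_zero_nat

theorem stmt_12 (X X₁ : Type*) [NormedAddCommGroup X] [NormedSpace ℝ X] [CompleteSpace X]
    [NormedAddCommGroup X₁] [NormedSpace ℝ X₁]
    (hrefl : Function.Surjective (NormedSpace.inclusionInDoubleDual ℝ X))
    (j : X →L[ℝ] X₁) (hjcompact : IsCompactOperator j) (hjinj : Function.Injective j)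
    (e : ℕ → X) (estar : ℕ → StrongDual ℝ X)
    (hbiorth : ∀ i k : ℕ, estar i (e k) = if i = k then 1 else 0)
    (hbasis : ∀ x : X, Tendsto (fun n => ∑ i ∈ Finset.range n, estar i x • e i)
      atTop (nhds x))
    (Z : ℕ → Set X)
    (hZ : ∀ k, Z k = closure (Submodule.span ℝ (e '' {i | k ≤ i}) : Set X))
    (β : ℕ → ℝ)
    (hβ : ∀ k, β k = sSup {r : ℝ | ∃ u ∈ Z k, ‖u‖ = 1 ∧ r = ‖j u‖}) :
    Tendsto β atTop (nhds 0) :=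
  stmt_12_general X X₁ hrefl j hjcompact e estar hbiorth hbasis Z hZ β hβ
end
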